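/- Let n ≥ 0 and 0 ≤ k ≤ n. If f ∈ H_k is invariant under all coordinate permutations, i.e. f(x ∘ σ) = f(x) for every permutation σ of the n coordinates and every x ∈ {0,1}^n, then f is a scalar multiple of the function x ↦ Σ_{y : ‖y‖ = k} χ_y(x). In other words, the space of zonal spherical functions with pole 0 inside H_k is one-dimensional. -/

import Mathlib

/-- The character `χ_y(x) = (-1)^{y·x}` on the Hamming cube `{0,1}^n`. -/
noncomputable def hammingCharacter (n : ℕ) (y : Fin n → ZMod 2) :
    (Fin n → ZMod 2) → ℂ :=
  fun x => (-1 : ℂ) ^ (∑ i : Fin n, (y i).val * (x i).val)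

/-- `H_k`: the span of the characters `χ_y` with Hamming weight `‖y‖ = k`. -/
noncomputable def cubeH (n k : ℕ) : Submodule ℂ ((Fin n → ZMod 2) → ℂ) :=
  Submodule.span ℂ {f | ∃ y : Fin n → ZMod 2, hammingNorm y = k ∧ f = hammingCharacter n y}

/-!
Writing `f̂(z) = 2⁻ⁿ ∑ₓ f(x) χ_z(x)`, orthogonality of the characters gives
`f = ∑_{‖z‖ = k} f̂(z) χ_z` for every `f ∈ H_k`. A coordinate permutation `σ` acts on characters
by `χ_{z ∘ σ}(x) = χ_z(x ∘ σ⁻¹)`, so for zonal `f` the coefficient `f̂` is constant on permutation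
orbits; over `ZMod 2` a vector is determined by its support, so the vectors of weight `k` form a
single orbit and all the coefficients in the expansion agree.
-/

open Finset Matrix

lemma neg_one_pow_zmod_two_val_add {R : Type*} [Ring R] (a b : ZMod 2) :
    (-1 : R) ^ (a + b).val = (-1) ^ a.val * (-1) ^ b.val := by
  rw [ZMod.val_add, ← neg_one_pow_eq_pow_mod_two, pow_add]

lemma zmod_two_eq_of_ne_zero_iff {a b : ZMod 2} : (a ≠ 0 ↔ b ≠ 0) → a = b := by
  revert a b; decide

section Characters

variable {n : ℕ}

lemma hammingCharacter_eq_neg_one_pow (y x : Fin n → ZMod 2) :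
    hammingCharacter n y x = (-1) ^ (y ⬝ᵥ x).val := by
  rw [hammingCharacter, neg_one_pow_eq_pow_mod_two, ← ZMod.val_natCast]
  push_cast [ZMod.natCast_zmod_val]
  rfl

lemma hammingCharacter_add_left (y z x : Fin n → ZMod 2) :
    hammingCharacter n (y + z) x = hammingCharacter n y x * hammingCharacter n z x := by
  simp only [hammingCharacter_eq_neg_one_pow, add_dotProduct, neg_one_pow_zmod_two_val_add]

lemma hammingCharacter_add_right (y x x' : Fin n → ZMod 2) :
    hammingCharacter n y (x + x') = hammingCharacter n y x * hammingCharacter n y x' := by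
  simp only [hammingCharacter_eq_neg_one_pow, dotProduct_add, neg_one_pow_zmod_two_val_add]

lemma hammingCharacter_comp_perm (y : Fin n → ZMod 2) (σ : Equiv.Perm (Fin n))
    (x : Fin n → ZMod 2) :
    hammingCharacter n (y ∘ σ) x = hammingCharacter n y (x ∘ σ.symm) := by
  simpa only [hammingCharacter_eq_neg_one_pow, Equiv.symm_symm]
    using congrArg (fun a : ZMod 2 => (-1 : ℂ) ^ a.val) (comp_equiv_symm_dotProduct y x σ.symm)

lemma sum_hammingCharacter (y : Fin n → ZMod 2) :
    ∑ x, hammingCharacter n y x = if y = 0 then 2 ^ n else 0 := by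
  split_ifs with hy
  · simp [hy, hammingCharacter_eq_neg_one_pow]
  obtain ⟨i, hi⟩ : ∃ i, y i ≠ 0 := Function.ne_iff.mp hy
  have hflip : hammingCharacter n y (Pi.single i 1) = -1 := by
    have hyi : y i = 1 := zmod_two_eq_of_ne_zero_iff (by simpa using hi)
    rw [hammingCharacter_eq_neg_one_pow, dotProduct_single, mul_one, hyi, ZMod.val_one, pow_one]
  -- translating by `Pi.single i 1` flips the sign of every term
  have hneg : ∑ x, hammingCharacter n y x = -∑ x, hammingCharacter n y x := calc
    ∑ x, hammingCharacter n y x = ∑ x, hammingCharacter n y (x + Pi.single i 1) :=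
      (Fintype.sum_equiv (Equiv.addRight (Pi.single i 1)) _ _ fun _ => rfl).symm
    _ = -∑ x, hammingCharacter n y x := by
      simp only [hammingCharacter_add_right, hflip, mul_neg_one, sum_neg_distrib]
  linear_combination hneg / 2

lemma sum_hammingCharacter_mul (y z : Fin n → ZMod 2) :
    ∑ x, hammingCharacter n y x * hammingCharacter n z x = if y = z then 2 ^ n else 0 := by
  have hyz : y + z = 0 ↔ y = z := by
    rw [add_eq_zero_iff_eq_neg, show -z = z from funext fun i => ZMod.neg_eq_self_mod_two (z i)]
  simp only [← hammingCharacter_add_left, sum_hammingCharacter, hyz]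

end Characters

noncomputable def cubeFourierCoeff (n : ℕ) (z : Fin n → ZMod 2) :
    ((Fin n → ZMod 2) → ℂ) →ₗ[ℂ] ℂ where
  toFun f := (2 ^ n)⁻¹ * ∑ x, f x * hammingCharacter n z x
  map_add' f g := by simp only [Pi.add_apply, add_mul, sum_add_distrib, mul_add]
  map_smul' c f := by simp only [Pi.smul_apply, smul_eq_mul, mul_assoc, ← mul_sum,
    RingHom.id_apply, mul_left_comm]

lemma cubeFourierCoeff_hammingCharacter {n : ℕ} (z y : Fin n → ZMod 2) :
    cubeFourierCoeff n z (hammingCharacter n y) = if y = z then 1 else 0 := by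
  simp only [cubeFourierCoeff, LinearMap.coe_mk, AddHom.coe_mk, sum_hammingCharacter_mul]
  split_ifs <;> simp

lemma eq_sum_cubeFourierCoeff_smul {n k : ℕ} {f : (Fin n → ZMod 2) → ℂ} (hf : f ∈ cubeH n k) :
    f = ∑ z ∈ univ.filter (fun z : Fin n → ZMod 2 => hammingNorm z = k),
      cubeFourierCoeff n z f • hammingCharacter n z := by
  let P := ∑ z ∈ univ.filter (fun z : Fin n → ZMod 2 => hammingNorm z = k),
    (cubeFourierCoeff n z).smulRight (hammingCharacter n z)
  suffices cubeH n k ≤ LinearMap.eqLocus LinearMap.id P by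
    simpa [P] using this hf
  refine Submodule.span_le.mpr ?_
  rintro _ ⟨y, hy, rfl⟩
  simp [P, cubeFourierCoeff_hammingCharacter, hy]

lemma cubeFourierCoeff_comp_perm {n : ℕ} {f : (Fin n → ZMod 2) → ℂ}
    (hf : ∀ (σ : Equiv.Perm (Fin n)) (x : Fin n → ZMod 2), f (x ∘ σ) = f x)
    (z : Fin n → ZMod 2) (σ : Equiv.Perm (Fin n)) :
    cubeFourierCoeff n (z ∘ σ) f = cubeFourierCoeff n z f := by
  simp only [cubeFourierCoeff, LinearMap.coe_mk, AddHom.coe_mk, hammingCharacter_comp_perm]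
  congr 1
  calc ∑ x, f x * hammingCharacter n z (x ∘ σ.symm)
      = ∑ x, f (x ∘ σ.symm) * hammingCharacter n z (x ∘ σ.symm) := by simp only [hf]
    _ = ∑ x, f x * hammingCharacter n z x :=
      Equiv.sum_comp (σ.arrowCongr (Equiv.refl _)) fun x => f x * hammingCharacter n z x

lemma exists_perm_comp_eq_of_hammingNorm_eq {ι : Type*} [Fintype ι] [DecidableEq ι]
    {y z : ι → ZMod 2} (h : hammingNorm y = hammingNorm z) :
    ∃ σ : Equiv.Perm ι, y ∘ σ = z := by
  have hcard : Fintype.card {i // z i ≠ 0} = Fintype.card {i // y i ≠ 0} := by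
    simpa only [Fintype.card_subtype, hammingNorm] using h.symm
  let e := Fintype.equivOfCardEq hcard
  refine ⟨e.extendSubtype, funext fun i => zmod_two_eq_of_ne_zero_iff ?_⟩
  by_cases hi : z i ≠ 0
  · exact iff_of_true (e.extendSubtype_mem i hi) hi
  · exact iff_of_false (e.extendSubtype_not_mem i hi) hi

lemma Finset.exists_sum_smul_eq_smul_sum {ι R M : Type*} [Monoid R] [AddCommMonoid M]
    [DistribMulAction R M] {s : Finset ι} {a : ι → R} (v : ι → M)
    (h : ∀ i ∈ s, ∀ j ∈ s, a i = a j) : ∃ c : R, ∑ i ∈ s, a i • v i = c • ∑ i ∈ s, v i := by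
  rcases s.eq_empty_or_nonempty with rfl | ⟨j, hj⟩
  · exact ⟨1, by simp⟩
  · exact ⟨a j, by rw [smul_sum]; exact sum_congr rfl fun i hi => by rw [h i hi j hj]⟩

theorem cube_zonal_one_dimensional_general (n k : ℕ)
    (f : (Fin n → ZMod 2) → ℂ) (hf : f ∈ cubeH n k)
    (hzonal : ∀ (σ : Equiv.Perm (Fin n)) (x : Fin n → ZMod 2), f (x ∘ σ) = f x) :
    ∃ c : ℂ, f = c • fun x =>
      ∑ y ∈ Finset.univ.filter (fun y : Fin n → ZMod 2 => hammingNorm y = k),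
        hammingCharacter n y x := by
  have hconst : ∀ y ∈ univ.filter (fun y : Fin n → ZMod 2 => hammingNorm y = k),
      ∀ z ∈ univ.filter (fun z : Fin n → ZMod 2 => hammingNorm z = k),
      cubeFourierCoeff n y f = cubeFourierCoeff n z f := by
    intro y hy z hz
    obtain ⟨σ, rfl⟩ := exists_perm_comp_eq_of_hammingNorm_eq
      ((mem_filter.mp hz).2.trans (mem_filter.mp hy).2.symm)
    exact cubeFourierCoeff_comp_perm hzonal z σ
  obtain ⟨c, hc⟩ := Finset.exists_sum_smul_eq_smul_sum (hammingCharacter n) hconst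
  refine ⟨c, ?_⟩
  rw [eq_sum_cubeFourierCoeff_smul hf, hc, Finset.sum_fn]

/-- the zonal spherical functions with pole `0` in `H_k` form a
one-dimensional space: any `f ∈ H_k` invariant under all coordinate permutations
is a scalar multiple of `x ↦ ∑_{‖y‖ = k} χ_y(x)`. -/
theorem cube_zonal_one_dimensional (n k : ℕ) (hk : k ≤ n)
    (f : (Fin n → ZMod 2) → ℂ) (hf : f ∈ cubeH n k)
    (hzonal : ∀ (σ : Equiv.Perm (Fin n)) (x : Fin n → ZMod 2), f (x ∘ σ) = f x) :
    ∃ c : ℂ, f = c • fun x =>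
      ∑ y ∈ Finset.univ.filter (fun y : Fin n → ZMod 2 => hammingNorm y = k),
        hammingCharacter n y x :=
  cube_zonal_one_dimensional_general n k f hf hzonal
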